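/- Let p > 0, δ > 0, H(x) = (1/δ)(δ − x)⁺ and h = (1/δ) 1_{[0,δ]} (so h = −H′ a.e.), and let A^{δ,p}_k = ⟨H, L^p_k⟩ and c^{δ,p}_k = ⟨h, L^p_k⟩ be their scaled Laguerre coefficients. Then for every k ≥ 0, A^{δ,p}_k = (−1)^k √(2p)/p − (1/p) c^{δ,p}_k − (2/p) Σ_{i=0}^{k−1} (−1)^{k−i} c^{δ,p}_i. -/

import Mathlib

open MeasureTheory

/-- The Laguerre polynomial `P_k(t) = ∑_{i=0}^k binom(k, k-i) (-t)^i / i!`. -/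
noncomputable def lagPoly (k : ℕ) (t : ℝ) : ℝ :=
  ∑ i ∈ Finset.range (k + 1), (k.choose (k - i) : ℝ) * (-t) ^ i / (Nat.factorial i : ℝ)

/-- The scaled Laguerre function `L^p_k(t) = √(2p) P_k(2pt) e^{-pt}`. -/
noncomputable def lagFun (p : ℝ) (k : ℕ) (t : ℝ) : ℝ :=
  Real.sqrt (2 * p) * lagPoly k (2 * p * t) * Real.exp (-(p * t))

/-- The function `H(x) = (1/δ)(δ - x)⁺`. -/
noncomputable def Hunif (δ : ℝ) (x : ℝ) : ℝ := (1 / δ) * max (δ - x) 0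

/-- The uniform density `h = (1/δ) 1_{[0,δ]}`. -/
noncomputable def hunif (δ : ℝ) (x : ℝ) : ℝ := Set.indicator (Set.Icc 0 δ) (fun _ => 1 / δ) x

/-- Scaled Laguerre coefficient `A^{δ,p}_k = ⟨H, L^p_k⟩`. -/
noncomputable def Acoef (δ p : ℝ) (k : ℕ) : ℝ := ∫ t in Set.Ioi (0:ℝ), Hunif δ t * lagFun p k t

/-- Scaled Laguerre coefficient `c^{δ,p}_k = ⟨h, L^p_k⟩`. -/
noncomputable def ccoef (δ p : ℝ) (k : ℕ) : ℝ := ∫ t in Set.Ioi (0:ℝ), hunif δ t * lagFun p k t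

open Finset in
lemma sum_lagPoly_eq (k : ℕ) (t : ℝ) :
    ∑ i ∈ range k, lagPoly i t
      = ∑ j ∈ range k, (k.choose (j+1) : ℝ) * (-t)^j / (Nat.factorial j : ℝ) := by
  induction k with
  | zero => simp
  | succ k ih =>
    rw [sum_range_succ, ih, lagPoly]
    have h1 : ∀ j ∈ range (k+1), (k.choose (k-j) : ℝ) * (-t)^j / (Nat.factorial j : ℝ)
        = (k.choose j : ℝ) * (-t)^j / (Nat.factorial j : ℝ) := by
      intro j hj
      rw [Nat.choose_symm (by simpa [Nat.lt_succ_iff] using hj)]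
    rw [Finset.sum_congr rfl h1]
    have h2 : ∑ j ∈ range k, (k.choose (j+1) : ℝ) * (-t)^j / (Nat.factorial j : ℝ)
        = ∑ j ∈ range (k+1), (k.choose (j+1) : ℝ) * (-t)^j / (Nat.factorial j : ℝ) := by
      rw [sum_range_succ, Nat.choose_succ_self]
      simp
    rw [h2, ← Finset.sum_add_distrib]
    refine Finset.sum_congr rfl fun j hj => ?_
    rw [Nat.choose_succ_succ]
    push_cast
    ring

open Finset in
lemma lagPoly_hasDerivAt (k : ℕ) (t : ℝ) :
    HasDerivAt (lagPoly k) (-∑ i ∈ Finset.range k, lagPoly i t) t := by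
  have h : ∀ i : ℕ, HasDerivAt
      (fun s : ℝ => (k.choose (k - i) : ℝ) * (-s) ^ i / (Nat.factorial i : ℝ))
      ((k.choose (k-i) : ℝ) * ((i:ℝ) * (-t)^(i-1) * (-1)) / (Nat.factorial i : ℝ)) t := by
    intro i
    have hn : HasDerivAt (fun s : ℝ => (-s)^i) ((i:ℝ) * (-t)^(i-1) * (-1)) t := by
      simpa using (hasDerivAt_neg t).fun_pow i
    exact (hn.const_mul _).div_const _
  have hsum : HasDerivAt (lagPoly k)
      (∑ i ∈ range (k+1), (k.choose (k-i) : ℝ) * ((i:ℝ) * (-t)^(i-1) * (-1)) / (Nat.factorial i : ℝ)) t := by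
    have := HasDerivAt.fun_sum (fun i (_ : i ∈ range (k+1)) => h i)
    unfold lagPoly
    simpa using this
  convert hsum using 1
  rw [Finset.sum_range_succ' (fun i => (k.choose (k-i) : ℝ) * ((i:ℝ) * (-t)^(i-1) * (-1)) / (Nat.factorial i : ℝ)) k]
  rw [sum_lagPoly_eq]
  simp only [Nat.cast_zero, zero_mul, mul_zero, zero_div, add_zero, Nat.cast_choose_two]
  rw [← Finset.sum_neg_distrib]
  refine Finset.sum_congr rfl fun j hj => ?_
  have hjk : j + 1 ≤ k := by simpa [Nat.lt_succ_iff] using (Finset.mem_range.mp hj)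
  have hc : k - (j+1) = k - 1 - j := by omega
  have hcs : (k.choose (k - (j+1)) : ℝ) = (k.choose (j+1) : ℝ) := by
    rw [Nat.choose_symm hjk]
  rw [hcs]
  have hfac : (Nat.factorial (j+1) : ℝ) = (j+1) * (Nat.factorial j : ℝ) := by
    push_cast [Nat.factorial_succ]; ring
  rw [hfac]
  have hj1 : ((j:ℝ)+1) ≠ 0 := by positivity
  have hjf : (Nat.factorial j : ℝ) ≠ 0 := by positivity
  simp only [Nat.add_sub_cancel]
  push_cast
  field_simp

lemma lagFun_hasDerivAt (p : ℝ) (k : ℕ) (t : ℝ) :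
    HasDerivAt (lagFun p k)
      (-(p * lagFun p k t) - 2 * p * ∑ i ∈ Finset.range k, lagFun p i t) t := by
  have hlin : HasDerivAt (fun s : ℝ => 2 * p * s) (2 * p) t := by
    simpa using (hasDerivAt_id t).const_mul (2*p)
  have h1 : HasDerivAt (fun s => lagPoly k (2*p*s))
      ((-∑ i ∈ Finset.range k, lagPoly i (2*p*t)) * (2*p)) t :=
    (lagPoly_hasDerivAt k (2*p*t)).comp t hlin
  have h2 : HasDerivAt (fun s : ℝ => Real.exp (-(p*s))) (Real.exp (-(p*t)) * (-p)) t := by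
    have : HasDerivAt (fun s : ℝ => -(p*s)) (-p) t := by
      simpa using ((hasDerivAt_id t).const_mul p).fun_neg
    exact this.exp
  have h3 := ((h1.const_mul (Real.sqrt (2*p))).mul h2)
  have hS : ∑ i ∈ Finset.range k, lagFun p i t
      = Real.sqrt (2*p) * (∑ i ∈ Finset.range k, lagPoly i (2*p*t)) * Real.exp (-(p*t)) := by
    simp only [lagFun]
    rw [← Finset.sum_mul, ← Finset.mul_sum]
  have hval : -(p * lagFun p k t) - 2 * p * ∑ i ∈ Finset.range k, lagFun p i t
      = Real.sqrt (2*p) * ((-∑ i ∈ Finset.range k, lagPoly i (2*p*t)) * (2*p))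
          * Real.exp (-(p*t))
        + (Real.sqrt (2*p) * lagPoly k (2*p*t)) * (Real.exp (-(p*t)) * (-p)) := by
    rw [hS, lagFun]; ring
  rw [hval]
  exact h3

/-- Antiderivative of `lagFun p k`. -/
noncomputable def Gfun (p : ℝ) (k : ℕ) (t : ℝ) : ℝ :=
  -(1/p) * (lagFun p k t + 2 * ∑ i ∈ Finset.range k, (-1:ℝ)^(k-i) * lagFun p i t)

open Finset in
lemma alt_sum (a : ℕ → ℝ) (k : ℕ) :
    ∑ i ∈ range k, (-1:ℝ)^(k-i) * (a i + 2*∑ j ∈ range i, a j)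
      = -∑ j ∈ range k, a j := by
  induction k with
  | zero => simp
  | succ k ih =>
    rw [sum_range_succ]
    have h : ∀ i ∈ range k, (-1:ℝ)^(k+1-i) * (a i + 2*∑ j ∈ range i, a j)
        = -((-1:ℝ)^(k-i) * (a i + 2*∑ j ∈ range i, a j)) := by
      intro i hi
      have hik : i < k := Finset.mem_range.mp hi
      rw [show k+1-i = (k-i)+1 by omega, pow_succ]
      ring
    rw [Finset.sum_congr rfl h, Finset.sum_neg_distrib, ih, sum_range_succ]
    simp only [Nat.add_sub_cancel_left, pow_one]
    ring

open Finset in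
lemma Gfun_hasDerivAt (p : ℝ) (hp : 0 < p) (k : ℕ) (t : ℝ) :
    HasDerivAt (Gfun p k) (lagFun p k t) t := by
  have hk := lagFun_hasDerivAt p k t
  have hi : ∀ i ∈ range k, HasDerivAt (fun s => (-1:ℝ)^(k-i) * lagFun p i s)
      ((-1:ℝ)^(k-i) * (-(p*lagFun p i t) - 2*p*∑ j ∈ range i, lagFun p j t)) t :=
    fun i _ => (lagFun_hasDerivAt p i t).const_mul _
  have hsum := HasDerivAt.fun_sum hi
  have h := ((hk.fun_add (hsum.const_mul 2)).const_mul (-(1/p)))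
  have h2 : ∑ i ∈ range k, (-1:ℝ)^(k-i) * (-(p*lagFun p i t) - 2*p*∑ j ∈ range i, lagFun p j t)
      = p * ∑ j ∈ range k, lagFun p j t := by
    have he : ∀ i ∈ range k,
        (-1:ℝ)^(k-i) * (-(p*lagFun p i t) - 2*p*∑ j ∈ range i, lagFun p j t)
        = -p * ((-1:ℝ)^(k-i) * (lagFun p i t + 2*∑ j ∈ range i, lagFun p j t)) := by
      intro i _; ring
    rw [Finset.sum_congr rfl he, ← Finset.mul_sum, alt_sum]
    ring
  rw [h2] at h
  have hval : lagFun p k t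
      = -(1/p) * ((-(p * lagFun p k t) - 2*p*∑ j ∈ range k, lagFun p j t)
          + 2 * (p * ∑ j ∈ range k, lagFun p j t)) := by
    field_simp
    ring
  rw [hval]
  exact h

lemma lagPoly_zero (k : ℕ) : lagPoly k 0 = 1 := by
  rw [lagPoly, Finset.sum_eq_single 0]
  · simp
  · intro i _ hne
    simp [zero_pow hne]
  · simp

lemma lagFun_zero (p : ℝ) (k : ℕ) : lagFun p k 0 = Real.sqrt (2*p) := by
  simp [lagFun, lagPoly_zero]

open Finset in
lemma sgn_sum (k : ℕ) : (1:ℝ) + 2*∑ i ∈ range k, (-1:ℝ)^(k-i) = (-1:ℝ)^k := by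
  induction k with
  | zero => simp
  | succ k ih =>
    rw [sum_range_succ]
    have h : ∀ i ∈ range k, (-1:ℝ)^(k+1-i) = -(-1:ℝ)^(k-i) := by
      intro i hi
      have hik : i < k := Finset.mem_range.mp hi
      rw [show k+1-i = (k-i)+1 by omega, pow_succ]
      ring
    rw [Finset.sum_congr rfl h, Finset.sum_neg_distrib]
    simp only [Nat.add_sub_cancel_left, pow_one, pow_succ]
    linarith [ih]

lemma Gfun_zero (p : ℝ) (hp : p ≠ 0) (k : ℕ) :
    Gfun p k 0 = -((-1:ℝ)^k * Real.sqrt (2*p) / p) := by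
  simp only [Gfun, lagFun_zero]
  rw [← Finset.sum_mul, ← sgn_sum k]
  field_simp

lemma lagFun_continuous (p : ℝ) (k : ℕ) : Continuous (lagFun p k) := by
  unfold lagFun lagPoly
  fun_prop

open Finset intervalIntegral in
/-- `A^{δ,p}_k = (-1)^k √(2p)/p - (1/p) c^{δ,p}_k - (2/p) ∑_{i=0}^{k-1} (-1)^{k-i} c^{δ,p}_i`. -/
theorem laguerre_coeff_relation_uniform (p δ : ℝ) (hp : 0 < p) (hδ : 0 < δ) (k : ℕ) :
    Acoef δ p k
      = (-1 : ℝ) ^ k * Real.sqrt (2 * p) / p - (1 / p) * ccoef δ p k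
        - (2 / p) * ∑ i ∈ Finset.range k, (-1 : ℝ) ^ (k - i) * ccoef δ p i := by
  -- reduce Ioi integrals to interval integrals on [0, δ]
  have key : ∀ f : ℝ → ℝ, (∀ t, δ < t → f t = 0) →
      ∫ t in Set.Ioi (0:ℝ), f t = ∫ t in Set.Ioc 0 δ, f t := by
    intro f hf
    have h1 : ∫ t in Set.Ioi (0:ℝ), f t = ∫ t in Set.Ioi (0:ℝ), (Set.Ioc 0 δ).indicator f t := by
      refine setIntegral_congr_fun measurableSet_Ioi ?_
      intro t ht
      by_cases h : t ∈ Set.Ioc 0 δ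
      · rw [Set.indicator_of_mem h]
      · rw [Set.indicator_of_notMem h, hf t]
        have ht' : 0 < t := ht
        simp only [Set.mem_Ioc, not_and, not_le] at h
        exact h ht'
    rw [h1, MeasureTheory.setIntegral_indicator measurableSet_Ioc,
      Set.inter_eq_self_of_subset_right Set.Ioc_subset_Ioi_self]
  have hA : Acoef δ p k = ∫ t in (0:ℝ)..δ, (1/δ)*(δ-t) * lagFun p k t := by
    rw [Acoef, key _ ?side, intervalIntegral.integral_of_le hδ.le]
    case side =>
      intro t ht
      have : max (δ - t) 0 = 0 := max_eq_right (by linarith)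
      simp [Hunif, this]
    refine setIntegral_congr_fun measurableSet_Ioc ?_
    intro t ht
    have : max (δ - t) 0 = δ - t := max_eq_left (by linarith [ht.2])
    simp [Hunif, this]
  have hc : ∀ i : ℕ, ccoef δ p i = (1/δ) * ∫ t in (0:ℝ)..δ, lagFun p i t := by
    intro i
    have heq : ∫ t in Set.Ioc (0:ℝ) δ, hunif δ t * lagFun p i t
        = ∫ t in Set.Ioc (0:ℝ) δ, (1/δ) * lagFun p i t := by
      refine setIntegral_congr_fun measurableSet_Ioc ?_
      intro t ht
      have : t ∈ Set.Icc (0:ℝ) δ := ⟨ht.1.le, ht.2⟩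
      simp [hunif, Set.indicator_of_mem this]
    rw [ccoef, key _ ?side2, heq, ← intervalIntegral.integral_of_le hδ.le,
      intervalIntegral.integral_const_mul]
    case side2 =>
      intro t ht
      have : t ∉ Set.Icc (0:ℝ) δ := by simp only [Set.mem_Icc, not_and, not_le]; intro _; linarith
      simp [hunif, Set.indicator_of_notMem this]
  -- integration by parts
  have hu : ∀ x ∈ Set.uIcc (0:ℝ) δ, HasDerivAt (fun t => (1/δ)*(δ-t)) (-(1/δ)) x := by
    intro x _
    have h := ((hasDerivAt_id x).const_sub δ).const_mul (1/δ)
    simpa using h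
  have hv : ∀ x ∈ Set.uIcc (0:ℝ) δ, HasDerivAt (Gfun p k) (lagFun p k x) x :=
    fun x _ => Gfun_hasDerivAt p hp k x
  have hu' : IntervalIntegrable (fun _ : ℝ => -(1/δ)) volume 0 δ := intervalIntegrable_const
  have hv' : IntervalIntegrable (lagFun p k) volume 0 δ :=
    (lagFun_continuous p k).intervalIntegrable 0 δ
  have hIBP := intervalIntegral.integral_mul_deriv_eq_deriv_mul hu hv hu' hv'
  -- compute the integral of Gfun
  have hGc : ∀ i ∈ range k, IntervalIntegrable
      (fun x => (-1:ℝ)^(k-i) * lagFun p i x) volume 0 δ :=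
    fun i _ => (continuous_const.mul (lagFun_continuous p i)).intervalIntegrable 0 δ
  have hsumC : Continuous (fun x => 2 * ∑ i ∈ range k, (-1:ℝ)^(k-i) * lagFun p i x) :=
    continuous_const.mul (continuous_finset_sum _ fun i _ => continuous_const.mul (lagFun_continuous p i))
  have hGint : ∫ x in (0:ℝ)..δ, Gfun p k x
      = -(1/p) * ((∫ x in (0:ℝ)..δ, lagFun p k x)
          + 2 * ∑ i ∈ range k, (-1:ℝ)^(k-i) * ∫ x in (0:ℝ)..δ, lagFun p i x) := by
    have hGdef : Gfun p k = fun x => -(1/p) * (lagFun p k x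
        + 2 * ∑ i ∈ range k, (-1:ℝ)^(k-i) * lagFun p i x) := rfl
    rw [hGdef, intervalIntegral.integral_const_mul,
      intervalIntegral.integral_add hv' (hsumC.intervalIntegrable 0 δ),
      intervalIntegral.integral_const_mul, intervalIntegral.integral_finset_sum hGc]
    simp only [intervalIntegral.integral_const_mul]
  -- assemble
  rw [hA, hIBP, intervalIntegral.integral_const_mul, hGint, Gfun_zero p hp.ne' k]
  have hcsum : ∑ i ∈ range k, (-1:ℝ)^(k-i) * ccoef δ p i
      = (1/δ) * ∑ i ∈ range k, (-1:ℝ)^(k-i) * ∫ x in (0:ℝ)..δ, lagFun p i x := by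
    rw [Finset.mul_sum]
    exact Finset.sum_congr rfl fun i _ => by rw [hc i]; ring
  rw [hc k, hcsum]
  have hδ0 : δ ≠ 0 := hδ.ne'
  have hp0 : p ≠ 0 := hp.ne'
  field_simp
  ring
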